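/- The 2-cochain α₁ on Φ' defined by α₁(e₂,e₄)=e₂, α₁(e₃,e₄)=-e₃ (and zero on all other pairs of basis elements, extended antisymmetrically) is a 2-cocycle for the Chevalley–Eilenberg complex of Φ' with coefficients in the adjoint representation: δα₁ = 0. -/
import Mathlib


noncomputable section

/-- The bracket of Φ′ on `Fin 4 → K`, basis `e₁,…,e₄` indexed `0,…,3`. -/
def brPhi' {K : Type*} [Field K] (x y : Fin 4 → K) : Fin 4 → K :=
  ![ -(x 0 * y 3 - x 3 * y 0) - (x 1 * y 2 - x 2 * y 1),
     -(1/2) * (x 1 * y 3 - x 3 * y 1),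
     -(1/2) * (x 2 * y 3 - x 3 * y 2),
     0 ]

/-- The 2-cochain `α₁` with `α₁(e₂,e₄)=e₂`, `α₁(e₃,e₄)=-e₃`, zero on all other
pairs of basis elements, extended antisymmetrically and bilinearly. -/
def alpha1 {K : Type*} [Field K] (x y : Fin 4 → K) : Fin 4 → K :=
  ![ 0,
     x 1 * y 3 - x 3 * y 1,
     -(x 2 * y 3 - x 3 * y 2),
     0 ]

/-- `α₁` is a Chevalley–Eilenberg 2-cocycle of Φ′ with coefficients in the
adjoint representation: `δα₁ = 0`. -/
theorem alpha1_is_cocycle {K : Type*} [Field K] (h2 : (2 : K) ≠ 0) :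
    ∀ x y z : Fin 4 → K,
      brPhi' x (alpha1 y z) - brPhi' y (alpha1 x z) + brPhi' z (alpha1 x y)
        - alpha1 (brPhi' x y) z + alpha1 (brPhi' x z) y - alpha1 (brPhi' y z) x = 0 := by
  intro x y z
  funext i
  fin_cases i <;> simp [brPhi', alpha1] <;> ring
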